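/- arXiv:0804.2206 — 3 statements merged into one kernel-verified Lean document; each statement's English description precedes it below -/
import Mathlib

section
/- Let {v_{2n}} be the polynomials associated with an admissible interpolation scheme A, with zeros in a fixed compact set K_0 ⊂ ℂ disjoint from the compact interval I ⊂ ℝ. Then for every ε > 0 there exist an integer l and, for all n large enough, a polynomial T_{l,n} with complex coefficients of degree at most l such that |v_{2n}(x)/|v_{2n}(x)| − T_{l,n}(x)| < ε for all x ∈ I. -/
open MeasureTheory Metric Complex Polynomial Filter Topology Asymptotics
open scoped Classical ENNReal

noncomputable section

/-- The support of a Borel measure on `ℝ`: points all of whose neighborhoods have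
positive measure. -/
def msupport (μ : Measure ℝ) : Set ℝ := {x : ℝ | ∀ ε > 0, 0 < μ (Metric.ball x ε)}

/-- A subset of `ℝ` viewed as a subset of `ℂ`. -/
def cemb (S : Set ℝ) : Set ℂ := (fun x : ℝ => (x : ℂ)) '' S

/-- Weak-star convergence of a sequence of measures on `ℂ`, tested against continuous
compactly supported functions. -/
def WeakStarTendsTo (ν : ℕ → Measure ℂ) (μ : Measure ℂ) : Prop :=
  ∀ f : ℂ → ℝ, Continuous f → HasCompactSupport f →
    Tendsto (fun n => ∫ z, f z ∂(ν n)) atTop (𝓝 (∫ z, f z ∂μ))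

/-- The logarithmic kernel `log (1/|z-w|)`. -/
def logKernel (z w : ℂ) : ℝ := Real.log (1 / ‖z - w‖)

/-- The logarithmic potential of a measure on `ℂ`. -/
def logPotential (μ : Measure ℂ) (z : ℂ) : ℝ := ∫ w, logKernel z w ∂μ

/-- A compactly supported measure has finite logarithmic energy iff the kernel is
integrable for the product measure. -/
def HasFiniteLogEnergy (μ : Measure ℂ) : Prop :=
  Integrable (fun p : ℂ × ℂ => logKernel p.1 p.2) (μ.prod μ)

/-- The logarithmic energy `I[μ] = ∬ log (1/|z-w|) dμ dμ`. -/
def logEnergy (μ : Measure ℂ) : ℝ := ∫ p : ℂ × ℂ, logKernel p.1 p.2 ∂(μ.prod μ)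

/-- A probability measure carried by the set `E`. -/
def IsProbOn (μ : Measure ℂ) (E : Set ℂ) : Prop :=
  IsProbabilityMeasure μ ∧ μ Eᶜ = 0

/-- `μ` is the (logarithmic) equilibrium measure of `E`: a probability measure on `E` of
finite energy minimizing the logarithmic energy. -/
def IsEquilibriumMeasure (E : Set ℂ) (μ : Measure ℂ) : Prop :=
  IsProbOn μ E ∧ HasFiniteLogEnergy μ ∧
    ∀ ν : Measure ℂ, IsProbOn ν E → HasFiniteLogEnergy ν → logEnergy μ ≤ logEnergy ν

/-- Logarithmic capacity of a compact set: `exp(-inf I[μ])`, the infimum over probability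
measures on the set (`0` if the set is polar). -/
def capCompact (K : Set ℂ) : ℝ :=
  sSup ((fun μ : Measure ℂ => Real.exp (-logEnergy μ)) ''
    {μ : Measure ℂ | IsProbOn μ K ∧ HasFiniteLogEnergy μ})

/-- Logarithmic capacity of an arbitrary set: supremum of the capacities of its
compact subsets. -/
def cap (E : Set ℂ) : ℝ :=
  sSup (capCompact '' {K : Set ℂ | IsCompact K ∧ K ⊆ E})

/-- Harmonicity on an open set via the mean value property. -/
def HarmonicOnMV (h : ℂ → ℝ) (U : Set ℂ) : Prop :=
  ContinuousOn h U ∧ ∀ z r, 0 < r → Metric.closedBall z r ⊆ U →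
    h z = (2 * Real.pi)⁻¹ *
      ∫ θ in (0:ℝ)..(2 * Real.pi), h (z + (r : ℂ) * Complex.exp ((θ : ℂ) * Complex.I))

/-- The complex measure `dλ = e^{iφ} dμ` belongs to the class `M`. -/
structure ClassM (μ : Measure ℝ) (φ : ℝ → ℝ) : Prop where
  finite : IsFiniteMeasure μ
  compact_supp : IsCompact (msupport μ)
  infinite_supp : (msupport μ).Infinite
  meas : Measurable φ
  bv : BoundedVariationOn φ (msupport μ)
  regular : ∃ ν : Measure ℂ, IsEquilibriumMeasure (cemb (msupport μ)) ν ∧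
      Continuous (logPotential ν)
  density : ∃ c > (0:ℝ), ∃ L > (0:ℝ), ∀ x ∈ msupport μ, ∀ δ : ℝ, δ ∈ Set.Ioo (0:ℝ) 1 →
      ENNReal.ofReal (c * δ ^ L) ≤ μ (Set.Icc (x - δ) (x + δ))

/-- The monic polynomial `z ↦ ∏ (z - ζ j)`, as a function. -/
def vfun {k : ℕ} (ζ : Fin k → ℂ) (z : ℂ) : ℂ := ∏ j, (z - ζ j)

/-- Normalized counting measure of a finite family of points. -/
def countMeas {k : ℕ} (ζ : Fin k → ℂ) : Measure ℂ :=
  ((k : ℝ≥0∞))⁻¹ • ∑ j, Measure.dirac (ζ j)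

/-- Counting measure of the roots of a polynomial (with multiplicity), normalized by `1/n`. -/
def rootMeasure (n : ℕ) (q : Polynomial ℂ) : Measure ℂ :=
  ((n : ℝ≥0∞))⁻¹ • (q.roots.map Measure.dirac).sum

/-- Denominator of the reduced form of the rational function `p/q`. -/
def redDenom (p q : Polynomial ℂ) : Polynomial ℂ := q / EuclideanDomain.gcd p q

/-- Numerator of the reduced form of the rational function `p/q`. -/
def redNum (p q : Polynomial ℂ) : Polynomial ℂ := p / EuclideanDomain.gcd p q

/-- Value at `z` of the rational function `p/q`. -/
def ratEval (p q : Polynomial ℂ) (z : ℂ) : ℂ := (redNum p q).eval z / (redDenom p q).eval z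

/-- Counting measure of the poles (with multiplicity) of the rational function `p/q`,
normalized by `1/n`. -/
def poleMeasure (n : ℕ) (p q : Polynomial ℂ) : Measure ℂ := rootMeasure n (redDenom p q)

/-- The Cauchy transform of `e^{iφ} dμ` plus the rational function `P/Q`. -/
def Fmeas (μ : Measure ℝ) (φ : ℝ → ℝ) (P Q : Polynomial ℂ) (z : ℂ) : ℂ :=
  (∫ t, Complex.exp (Complex.I * (φ t : ℂ)) / (z - (t : ℂ)) ∂μ) + P.eval z / Q.eval z

/-- The Cauchy transform of `ρ dμ` plus the rational function `P/Q`. -/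
def Fdens (μ : Measure ℝ) (ρ : ℝ → ℂ) (P Q : Polynomial ℂ) (z : ℂ) : ℂ :=
  (∫ t, ρ t / (z - (t : ℂ)) ∂μ) + P.eval z / Q.eval z

/-- `(p, q)` is a multipoint Padé pair of order `n` for `F` (holomorphic on `Ω`) with
interpolation polynomial `v`:  `deg p ≤ n`, `deg q ≤ n`, `q ≠ 0`, `(qF - p)/v` extends
holomorphically to `Ω`, and the extension is `O(1/z^{n+1})` at infinity. -/
def IsPadePair (F : ℂ → ℂ) (Ω : Set ℂ) (n : ℕ) (v : ℂ → ℂ) (p q : Polynomial ℂ) : Prop :=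
  p.natDegree ≤ n ∧ q.natDegree ≤ n ∧ q ≠ 0 ∧
  ∃ g : ℂ → ℂ, DifferentiableOn ℂ g Ω ∧
    (∀ z ∈ Ω, v z ≠ 0 → g z = (q.eval z * F z - p.eval z) / v z) ∧
    g =O[Bornology.cobounded ℂ] fun z => (z ^ (n + 1))⁻¹

/-- Principal branch of the argument, with the convention `A(0) = π`. -/
def argA (z : ℂ) : ℝ := if z = 0 then Real.pi else Complex.arg z

/-- The angle in which the interval `[a,b]` is seen at `ξ`. -/
def ang (ξ : ℂ) (a b : ℝ) : ℝ := |argA ((a : ℂ) - ξ) - argA ((b : ℂ) - ξ)|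

/-- The angle function of a system of intervals. -/
def theta {m : ℕ} (a b : Fin m → ℝ) (ξ : ℂ) : ℝ := ∑ j, ang ξ (a j) (b j)

/-- An admissible interpolation scheme: points `ζ n` lie in a compact set `K₀` disjoint
from `Ih`, normalized counting measures converge weak-star to a probability measure `σ`
of finite logarithmic energy, and the derivatives of `v_{2n}/|v_{2n}|` are uniformly
bounded on `Ih`. -/
structure Admissible (K₀ : Set ℂ) (Ih : Set ℝ) (ζ : ∀ n : ℕ, Fin (2 * n) → ℂ)
    (σ : Measure ℂ) : Prop where
  compact : IsCompact K₀
  disjI : ∀ x ∈ Ih, (x : ℂ) ∉ K₀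
  mem : ∀ n j, ζ n j ∈ K₀
  prob : IsProbabilityMeasure σ
  energy : HasFiniteLogEnergy σ
  wstar : WeakStarTendsTo (fun n => countMeas (ζ n)) σ
  deriv_bound : ∃ C : ℝ, ∀ n, ∀ x ∈ Ih,
    ‖deriv (fun y : ℝ => vfun (ζ n) (y : ℂ) / (‖vfun (ζ n) (y : ℂ)‖ : ℂ)) x‖ ≤ C

/-- A uniform bound `V_A` on the variation of continuous branches of the argument of
`v_{2n}` on `Ih`. -/
def VarBound (Ih : Set ℝ) (ζ : ∀ n : ℕ, Fin (2 * n) → ℂ) (VA : ℝ) : Prop :=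
  ∀ n, ∃ ψ : ℝ → ℝ, ContinuousOn ψ Ih ∧
    (∀ x ∈ Ih, vfun (ζ n) (x : ℂ)
      = (‖vfun (ζ n) (x : ℂ)‖ : ℂ) * Complex.exp (Complex.I * (ψ x : ℂ))) ∧
    (eVariationOn ψ Ih).toReal ≤ VA

/-- The orthogonality relation `∫ t^k Q_s(t) q_n(t) / v_{2n}(t) dλ(t) = 0` for
`dλ = e^{iφ} dμ`. -/
def OrthRel (μ : Measure ℝ) (φ : ℝ → ℝ) (Q : Polynomial ℂ) {k2 : ℕ} (ζ : Fin k2 → ℂ)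
    (qn : Polynomial ℂ) (k : ℕ) : Prop :=
  ∫ t, (t : ℂ) ^ k * Q.eval (t : ℂ) * qn.eval (t : ℂ) / vfun ζ (t : ℂ)
      * Complex.exp (Complex.I * (φ t : ℂ)) ∂μ = 0

/-- The upper characteristic `m̄(z)` of a sequence of (multi)sets of poles. -/
def upperChar (poles : ℕ → Multiset ℂ) (z : ℂ) : ℕ∞ :=
  ⨅ (U : Set ℂ) (_ : IsOpen U) (_ : z ∈ U),
    Filter.limsup (fun n => ((Multiset.filter (fun w => w ∈ U) (poles n)).card : ℕ∞))
      Filter.atTop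

/-- Subharmonicity on an open set for `[-∞,∞)`-valued functions: upper semicontinuous,
not identically `-∞` on any connected component, and satisfying the sub-mean value
inequality (tested against integrable majorants of the values on circles). -/
def SubharmonicOn (u : ℂ → EReal) (D : Set ℂ) : Prop :=
  UpperSemicontinuousOn u D ∧
  (∀ z ∈ D, u z ≠ ⊤) ∧
  (∀ z ∈ D, ∃ w ∈ connectedComponentIn D z, u w ≠ ⊥) ∧
  ∀ z r, 0 < r → Metric.closedBall z r ⊆ D →
    ∀ g : ℝ → ℝ, IntervalIntegrable g MeasureTheory.volume 0 (2 * Real.pi) →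
      (∀ θ ∈ Set.Icc (0:ℝ) (2 * Real.pi),
        u (z + (r : ℂ) * Complex.exp ((θ : ℂ) * Complex.I)) ≤ (g θ : EReal)) →
      u z ≤ (((2 * Real.pi)⁻¹ * ∫ θ in (0:ℝ)..(2 * Real.pi), g θ : ℝ) : EReal)

end

/-
The derivative bound makes all the functions `v_{2n}/|v_{2n}|` Lipschitz on `I` with one
constant `K` (mean value theorem). The Bernstein polynomial of degree `m` of a `K`-Lipschitz
function on `[0,1]` is within `K · Σ_k b_{m,k}(x) |k/m - x| ≤ K/(2√m)` of it, because the
binomial distribution has variance `x(1-x)/m ≤ 1/(4m)`. This bound does not depend on `n`,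
so after rescaling `[0,1]` onto `I` a single degree `m` serves every `n`.
-/

section Bernstein

open scoped unitInterval

theorem bernstein_sum_mul_abs_sub_le {m : ℕ} (hm : m ≠ 0) (x : I) :
    ∑ k : Fin (m + 1), bernstein m k x * |(bernstein.z k : ℝ) - x| ≤ 1 / (2 * √m) := by
  have hm' : (0 : ℝ) < m := by positivity
  have jensen := (convexOn_pow 2).map_sum_le (t := Finset.univ)
    (w := fun k : Fin (m + 1) => bernstein m k x) (p := fun k => |(bernstein.z k : ℝ) - x|)
    (fun _ _ => bernstein_nonneg) (bernstein.probability m x)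
    (fun _ _ => Set.mem_Ici.2 (abs_nonneg _))
  simp only [smul_eq_mul, sq_abs] at jensen
  refine le_of_pow_le_pow_left₀ two_ne_zero (by positivity) (jensen.trans ?_)
  calc ∑ k : Fin (m + 1), bernstein m k x * ((bernstein.z k : ℝ) - x) ^ 2
      = (x : ℝ) * (1 - x) / m := by
        rw [← bernstein.variance hm x]
        exact Finset.sum_congr rfl fun k _ => by ring
    _ ≤ 1 / (4 * m) := by
      rw [div_le_div_iff₀ hm' (by positivity)]
      nlinarith [sq_nonneg ((x : ℝ) - 1 / 2)]
    _ = (1 / (2 * √m)) ^ 2 := by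
      rw [div_pow, mul_pow, Real.sq_sqrt hm'.le]
      ring

theorem LipschitzWith.norm_sum_bernstein_smul_sub_le {E : Type*} [NormedAddCommGroup E]
    [NormedSpace ℝ E] {f : I → E} {K : NNReal} (hf : LipschitzWith K f) {m : ℕ} (hm : m ≠ 0)
    (x : I) :
    ‖∑ k : Fin (m + 1), bernstein m k x • f (bernstein.z k) - f x‖ ≤ K / (2 * √m) := by
  have hsum : ∑ k : Fin (m + 1), bernstein m k x • f (bernstein.z k) - f x
      = ∑ k : Fin (m + 1), bernstein m k x • (f (bernstein.z k) - f x) := by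
    simp only [smul_sub, Finset.sum_sub_distrib, ← Finset.sum_smul, bernstein.probability,
      one_smul]
  calc ‖∑ k : Fin (m + 1), bernstein m k x • f (bernstein.z k) - f x‖
      ≤ ∑ k : Fin (m + 1), bernstein m k x * (K * |(bernstein.z k : ℝ) - x|) := by
        rw [hsum]
        refine (norm_sum_le _ _).trans (Finset.sum_le_sum fun k _ => ?_)
        rw [norm_smul, Real.norm_of_nonneg bernstein_nonneg, ← dist_eq_norm]
        exact mul_le_mul_of_nonneg_left (hf.dist_le_mul _ _) bernstein_nonneg
    _ = K * ∑ k : Fin (m + 1), bernstein m k x * |(bernstein.z k : ℝ) - x| := by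
        rw [Finset.mul_sum]; exact Finset.sum_congr rfl fun k _ => by ring
    _ ≤ K * (1 / (2 * √m)) := mul_le_mul_of_nonneg_left (bernstein_sum_mul_abs_sub_le hm x) K.2
    _ = K / (2 * √m) := by ring

theorem bernsteinPolynomial.natDegree_le (R : Type*) [CommRing R] (n ν : ℕ) :
    (bernsteinPolynomial R n ν).natDegree ≤ n := by
  rcases lt_or_ge n ν with h | h
  · simp [bernsteinPolynomial.eq_zero_of_lt R h]
  unfold bernsteinPolynomial
  compute_degree
  omega

theorem bernsteinPolynomial.eval_ofReal (n ν : ℕ) (x : I) :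
    (bernsteinPolynomial ℂ n ν).eval (x : ℂ) = bernstein n ν x := by
  simp [bernstein_apply, bernsteinPolynomial]

noncomputable def bernsteinApproxPoly (m : ℕ) (f : I → ℂ) : ℂ[X] :=
  ∑ k : Fin (m + 1), C (f (bernstein.z k)) * bernsteinPolynomial ℂ m k

theorem natDegree_bernsteinApproxPoly_le (m : ℕ) (f : I → ℂ) :
    (bernsteinApproxPoly m f).natDegree ≤ m :=
  natDegree_sum_le_of_forall_le _ _ fun k _ =>
    natDegree_C_mul_le _ _ |>.trans (bernsteinPolynomial.natDegree_le ℂ m k)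

theorem eval_ofReal_bernsteinApproxPoly (m : ℕ) (f : I → ℂ) (x : I) :
    (bernsteinApproxPoly m f).eval (x : ℂ) =
      ∑ k : Fin (m + 1), bernstein m k x • f (bernstein.z k) := by
  simp only [bernsteinApproxPoly, eval_finsetSum, eval_mul, eval_C,
    bernsteinPolynomial.eval_ofReal, Complex.real_smul, mul_comm]

theorem LipschitzOnWith.exists_natDegree_le_norm_sub_eval_le {f : ℝ → ℂ} {a b : ℝ}
    {K : NNReal} (hf : LipschitzOnWith K f (Set.Icc a b)) {m : ℕ} (hm : m ≠ 0) :
    ∃ T : ℂ[X], T.natDegree ≤ m ∧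
      ∀ x ∈ Set.Icc a b, ‖f x - T.eval (x : ℂ)‖ ≤ K * (b - a) / (2 * √m) := by
  rcases lt_or_ge b a with hba | hab
  · exact ⟨0, by simp, fun x hx => absurd (hx.1.trans hx.2) (not_le.2 hba)⟩
  set φ : I → ℝ := fun s => a + (b - a) * s
  have hφ_lip : LipschitzWith (b - a).toNNReal φ := LipschitzWith.of_dist_le_mul fun s t => by
    simp only [φ, Real.dist_eq, Subtype.dist_eq, Real.coe_toNNReal _ (sub_nonneg.2 hab)]
    rw [add_sub_add_left_eq_sub, ← mul_sub, abs_mul, abs_of_nonneg (sub_nonneg.2 hab)]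
  have hφ_mem : ∀ s : I, φ s ∈ Set.Icc a b := fun s => by
    constructor <;> nlinarith [s.2.1, s.2.2]
  have hg : LipschitzWith (K * (b - a).toNNReal) (f ∘ φ) :=
    lipschitzOnWith_univ.1 (hf.comp hφ_lip.lipschitzOnWith fun s _ => hφ_mem s)
  set q : ℂ[X] := C ((b - a : ℝ) : ℂ)⁻¹ * (X - C (a : ℂ))
  refine ⟨(bernsteinApproxPoly m (f ∘ φ)).comp q, ?_, ?_⟩
  · refine natDegree_comp_le.trans ?_
    have : q.natDegree ≤ 1 := by simp only [q]; compute_degree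
    nlinarith [natDegree_bernsteinApproxPoly_le m (f ∘ φ)]
  intro x hx
  -- for `a = b` this reads `0 ∈ I`, as `(x - a) / 0 = 0`
  have ht : (x - a) / (b - a) ∈ I := by
    rcases hab.eq_or_lt with rfl | hlt
    · simp
    · exact ⟨div_nonneg (by linarith [hx.1]) (by linarith),
        (div_le_one (by linarith)).2 (by linarith [hx.2])⟩
  have hφt : φ ⟨_, ht⟩ = x := by
    rcases hab.eq_or_lt with rfl | hlt
    · simp [φ, le_antisymm hx.2 hx.1]
    · simp only [φ]
      field_simp
      ring
  set t : I := ⟨_, ht⟩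
  have heval : q.eval (x : ℂ) = ((t : ℝ) : ℂ) := by
    simp [q, t, div_eq_inv_mul]
  have happrox := hg.norm_sum_bernstein_smul_sub_le hm t
  rw [Function.comp_apply, hφt, NNReal.coe_mul, Real.coe_toNNReal _ (sub_nonneg.2 hab)] at happrox
  rwa [eval_comp, heval, eval_ofReal_bernsteinApproxPoly, norm_sub_rev]

end Bernstein

theorem DifferentiableAt.div_ofReal_norm {g : ℝ → ℂ} {x : ℝ} (hg : DifferentiableAt ℝ g x)
    (hx : g x ≠ 0) : DifferentiableAt ℝ (fun y => g y / (‖g y‖ : ℂ)) x :=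
  hg.div (ofRealCLM.differentiableAt.comp x (hg.norm ℝ hx)) (by simpa using hx)

theorem vfun_ne_zero {k : ℕ} {ζ : Fin k → ℂ} {z : ℂ} (h : ∀ j, ζ j ≠ z) :
    vfun ζ z ≠ 0 :=
  Finset.prod_ne_zero_iff.2 fun j _ => sub_ne_zero.2 (h j).symm

theorem differentiable_vfun {k : ℕ} (ζ : Fin k → ℂ) : Differentiable ℂ (vfun ζ) := by
  unfold vfun
  fun_prop

theorem Admissible.exists_lipschitzOnWith {K₀ : Set ℂ} {Ih : Set ℝ}
    {ζ : ∀ n : ℕ, Fin (2 * n) → ℂ} {σ : Measure ℂ} (hadm : Admissible K₀ Ih ζ σ)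
    (hI : Convex ℝ Ih) : ∃ K : NNReal, ∀ n,
      LipschitzOnWith K (fun x : ℝ => vfun (ζ n) x / (‖vfun (ζ n) x‖ : ℂ)) Ih := by
  obtain ⟨C, hC⟩ := hadm.deriv_bound
  refine ⟨C.toNNReal, fun n =>
    hI.lipschitzOnWith_of_nnnorm_deriv_le (fun x hx => ?_) fun x hx => ?_⟩
  · have hv : vfun (ζ n) x ≠ 0 := vfun_ne_zero fun j h => hadm.disjI x hx (h ▸ hadm.mem n j)
    exact (((differentiable_vfun (ζ n) x).restrictScalars ℝ).comp x
      ofRealCLM.differentiableAt).div_ofReal_norm hv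
  · rw [← NNReal.coe_le_coe, coe_nnnorm]
    exact (hC n x hx).trans (Real.le_coe_toNNReal C)

/-- Uniform polynomial approximation of `v_{2n}/|v_{2n}|` on `I` of
uniformly bounded degree, for an admissible interpolation scheme. -/
theorem stmt9
    (a b : ℝ) (K₀ : Set ℂ) (ζ : ∀ n : ℕ, Fin (2 * n) → ℂ) (σ : Measure ℂ)
    (hadm : Admissible K₀ (Set.Icc a b) ζ σ) :
    ∀ ε : ℝ, 0 < ε → ∃ l : ℕ, ∃ N : ℕ, ∀ n ≥ N, ∃ T : Polynomial ℂ,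
      T.natDegree ≤ l ∧ ∀ x ∈ Set.Icc a b,
        ‖vfun (ζ n) (x : ℂ) / (‖vfun (ζ n) (x : ℂ)‖ : ℂ)
          - T.eval (x : ℂ)‖ < ε := by
  intro ε hε
  obtain ⟨K, hK⟩ := hadm.exists_lipschitzOnWith (convex_Icc a b)
  have hlim : Tendsto (fun m : ℕ => K * (b - a) / (2 * √m)) atTop (𝓝 0) :=
    tendsto_const_nhds.div_atTop
      ((Real.tendsto_sqrt_atTop.comp tendsto_natCast_atTop_atTop).const_mul_atTop two_pos)
  obtain ⟨m, hmε, hm⟩ :=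
    ((hlim.eventually (gt_mem_nhds hε)).and (eventually_ne_atTop 0)).exists
  refine ⟨m, 0, fun n _ => ?_⟩
  obtain ⟨T, hdeg, hT⟩ := (hK n).exists_natDegree_le_norm_sub_eval_le hm
  exact ⟨T, hdeg, fun x hx => (hT x hx).trans_lt hmε⟩
end

section
/- Let S ⊆ ℝ and f : S → ℂ with |f(x)| = 1 for all x ∈ S. Then f has bounded variation on S, i.e. V(f,S) := sup{Σ_{j=1}^N |f(x_j) − f(x_{j−1})|} < ∞ (supremum over all finite increasing sequences x_0 < … < x_N in S), if and only if there exists a real-valued function φ : S → ℝ of bounded variation on S such that f(x) = e^{iφ(x)} for all x ∈ S. -/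
open MeasureTheory Metric Complex Polynomial Filter Topology Asymptotics
open scoped Classical ENNReal

/-!
Let `v` be the arc length of `f` along `S` (`variationOnFromTo`); then `f = g ∘ v` with `g`
1-Lipschitz on `v '' S`, so it suffices to lift `g`. Cut the line into cells of length `1/4`,
pick monotonically a point of `v '' S` in each occupied cell, lift `g` along this `ℤ`-indexed
chain by adding principal arguments of consecutive quotients, and correct inside each cell by a
small principal argument. Jordan's inequality `|θ| ≤ π / 2 * ‖exp (I * θ) - 1‖` for `|θ| ≤ π`
bounds every such argument by a chord of `g`, which makes the lift `ψ` of `g` `π`-Lipschitz, so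
`ψ ∘ v` has bounded variation. Conversely `t ↦ exp (I * t)` is 1-Lipschitz.
-/

open scoped Real

theorem norm_exp_I_mul_sub_exp_I_mul (a b : ℝ) :
    ‖exp (I * a) - exp (I * b)‖ = ‖exp (I * ↑(a - b)) - 1‖ := by
  have : exp (I * a) - exp (I * b) = exp (I * b) * (exp (I * ↑(a - b)) - 1) := by
    rw [mul_sub, mul_one, ← exp_add]; push_cast; ring_nf
  rw [this, norm_mul, mul_comm (I : ℂ), norm_exp_ofReal_mul_I, one_mul]

theorem lipschitzWith_exp_I_mul : LipschitzWith 1 fun t : ℝ => exp (I * t) :=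
  LipschitzWith.of_dist_le_mul fun a b => by
    rw [dist_eq_norm, norm_exp_I_mul_sub_exp_I_mul, NNReal.coe_one, one_mul, Real.dist_eq]
    exact Real.norm_exp_I_mul_ofReal_sub_one_le

theorem abs_le_pi_div_two_mul_norm_exp_I_mul_sub_one {θ : ℝ} (hθ : |θ| ≤ π) :
    |θ| ≤ π / 2 * ‖exp (I * θ) - 1‖ := by
  have hsin := Real.mul_abs_le_abs_sin (x := θ / 2) (by rw [abs_div, abs_two]; linarith)
  rw [norm_exp_I_mul_ofReal_sub_one, norm_mul, Real.norm_eq_abs, Real.norm_eq_abs, abs_two]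
  rw [abs_div, abs_two] at hsin
  have := Real.pi_pos
  calc |θ| = π * (2 / π * (|θ| / 2)) := by field_simp
    _ ≤ π * |Real.sin (θ / 2)| := by gcongr
    _ = π / 2 * (2 * |Real.sin (θ / 2)|) := by ring

theorem abs_sub_le_pi_div_two_mul_norm_exp_I_mul_sub {a b : ℝ} (hab : |a - b| ≤ π) :
    |a - b| ≤ π / 2 * ‖exp (I * a) - exp (I * b)‖ := by
  rw [norm_exp_I_mul_sub_exp_I_mul]
  exact abs_le_pi_div_two_mul_norm_exp_I_mul_sub_one hab

theorem exp_I_mul_arg {z : ℂ} (hz : ‖z‖ = 1) : exp (I * arg z) = z := by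
  simpa [hz, mul_comm] using norm_mul_exp_arg_mul_I z

theorem abs_arg_div_le {z w : ℂ} (hz : ‖z‖ = 1) (hw : ‖w‖ = 1) :
    |arg (w / z)| ≤ π / 2 * ‖w - z‖ := by
  have hwz : ‖w / z‖ = 1 := by rw [norm_div, hz, hw, div_one]
  have hz0 : z ≠ 0 := norm_ne_zero_iff.mp (by rw [hz]; exact one_ne_zero)
  have := abs_le_pi_div_two_mul_norm_exp_I_mul_sub_one (abs_arg_le_pi (w / z))
  rwa [exp_I_mul_arg hwz, div_sub_one hz0, norm_div, hz, div_one] at this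

theorem Int.exists_add_one_eq_add (δ : ℤ → ℝ) (c : ℝ) :
    ∃ θ : ℤ → ℝ, θ 0 = c ∧ ∀ m, θ (m + 1) = θ m + δ m := by
  refine ⟨fun m => c + ∑ i ∈ Finset.Ico 0 m, δ i - ∑ i ∈ Finset.Ico m 0, δ i, by simp,
    fun m => ?_⟩
  dsimp only
  rcases le_or_gt 0 m with hm | hm
  · rw [← Finset.sum_Ico_add_eq_sum_Ico_add_one hm, Finset.Ico_eq_empty_of_le hm,
      Finset.Ico_eq_empty_of_le (show (0 : ℤ) ≤ m + 1 by omega)]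
    ring
  · rw [← Finset.insert_Ico_add_one_left_eq_Ico hm, Finset.sum_insert (by simp),
      Finset.Ico_eq_empty_of_le hm.le,
      Finset.Ico_eq_empty_of_le (show m + 1 ≤ 0 by omega)]
    ring

theorem exists_int_lift (z : ℤ → ℂ) (hz : ∀ m, ‖z m‖ = 1) :
    ∃ θ : ℤ → ℝ, (∀ m, exp (I * θ m) = z m) ∧
      ∀ m, |θ (m + 1) - θ m| ≤ π / 2 * ‖z (m + 1) - z m‖ := by
  obtain ⟨θ, hθ0, hθ⟩ :=
    Int.exists_add_one_eq_add (fun m => arg (z (m + 1) / z m)) (arg (z 0))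
  have hz0 : ∀ m, z m ≠ 0 := fun m => norm_ne_zero_iff.mp (by rw [hz]; exact one_ne_zero)
  have hstep : ∀ m, exp (I * θ (m + 1)) = exp (I * θ m) * (z (m + 1) / z m) := fun m => by
    rw [hθ, ofReal_add, mul_add, exp_add, exp_I_mul_arg (by rw [norm_div, hz, hz, div_one])]
  refine ⟨θ, fun m => ?_, fun m => ?_⟩
  · induction m using Int.induction_on with
    | zero => rw [hθ0, exp_I_mul_arg (hz 0)]
    | succ m ih => rw [hstep, ih, mul_div_cancel₀ _ (hz0 m)]
    | pred m ih =>
      have h := hstep (-m - 1)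
      rwa [sub_add_cancel, ih, eq_comm, ← eq_div_iff (div_ne_zero (hz0 _) (hz0 _)),
        div_div_cancel₀ (hz0 _)] at h
  · rw [hθ, add_sub_cancel_left]
    exact abs_arg_div_le (hz m) (hz (m + 1))

theorem Int.abs_sub_le_of_forall_abs_sub_le {θ w : ℤ → ℝ} {a m : ℤ} (ham : a ≤ m)
    (h : ∀ i, a ≤ i → |θ (i + 1) - θ i| ≤ w (i + 1) - w i) :
    |θ m - θ a| ≤ w m - w a := by
  induction m, ham using Int.leInduction with
  | base => simp
  | succ i hai ih =>
    calc |θ (i + 1) - θ a| ≤ |θ (i + 1) - θ i| + |θ i - θ a| := abs_sub_le _ _ _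
      _ ≤ w (i + 1) - w a := by linarith [h i hai]

theorem Monotone.exists_representatives {α : Type*} [LinearOrder α] {K : α → ℤ}
    (hK : Monotone K) {T : Set α} (hT : T.Nonempty) :
    ∃ r : ℤ → α, (∀ m, r m ∈ T) ∧ (∀ t ∈ T, K (r (K t)) = K t) ∧
      ∀ t ∈ T, MonotoneOn r (Set.Ici (K t)) := by
  obtain ⟨t₀, ht₀⟩ := hT
  have : Nonempty α := ⟨t₀⟩
  set C : ℤ → Set ℤ := fun m => K '' T ∩ Set.Iic m
  have hCbdd : ∀ m, BddAbove (C m) := fun m => ⟨m, fun _ h => h.2⟩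
  have hCmem : ∀ t ∈ T, ∀ m, K t ≤ m → sSup (C m) ∈ C m := fun t ht m htm =>
    Int.csSup_mem ⟨K t, ⟨t, ht, rfl⟩, htm⟩ (hCbdd m)
  -- `r m` is a point of `T` in the last cell `K ⁻¹' {k}`, `k ≤ m`, that meets `T`.
  let r : ℤ → α := fun m =>
    if (C m).Nonempty then Function.invFunOn K T (sSup (C m)) else t₀
  have hr : ∀ t ∈ T, ∀ m, K t ≤ m → r m = Function.invFunOn K T (sSup (C m)) :=
    fun t ht m htm => if_pos ⟨_, hCmem t ht m htm⟩
  have hKr : ∀ t ∈ T, ∀ m, K t ≤ m → K (r m) = sSup (C m) := fun t ht m htm => by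
    rw [hr t ht m htm]
    exact Function.invFunOn_eq (hCmem t ht m htm).1
  refine ⟨r, fun m => ?_, fun t ht => ?_, fun t ht m hm m' _ hmm' => ?_⟩
  · by_cases hne : (C m).Nonempty
    · simp only [r, if_pos hne]
      exact Function.invFunOn_mem (Int.csSup_mem hne (hCbdd m)).1
    · simp only [r, if_neg hne, ht₀]
  · rw [hKr t ht _ le_rfl]
    exact IsGreatest.csSup_eq ⟨⟨⟨t, ht, rfl⟩, Set.mem_Iic.mpr le_rfl⟩, fun _ h => h.2⟩
  · have hle : sSup (C m) ≤ sSup (C m') :=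
      csSup_le_csSup (hCbdd m') ⟨_, hCmem t ht m hm⟩
        (Set.inter_subset_inter_right _ (Set.Iic_subset_Iic.mpr hmm'))
    rcases hle.eq_or_lt with heq | hlt
    · rw [hr t ht m hm, hr t ht m' (hm.trans hmm'), heq]
    · rw [← hKr t ht m hm, ← hKr t ht m' (hm.trans hmm')] at hlt
      exact (hK.reflect_lt hlt).le

-- Increments of size at most `π` are controlled by the chords of `g` (Jordan's inequality);
-- larger ones only occur over distances `t - s ≥ 1`, where the coarse bound suffices.
theorem lipschitzOnWith_pi_of_abs_sub_le {T : Set ℝ} {g : ℝ → ℂ} {ψ : ℝ → ℝ}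
    (hg : LipschitzOnWith 1 g T) (hψ : ∀ t ∈ T, g t = exp (I * ψ t))
    (hψT : ∀ s ∈ T, ∀ t ∈ T, s ≤ t → |ψ t - ψ s| ≤ π / 2 * (t - s + 1)) :
    LipschitzOnWith NNReal.pi ψ T := by
  refine LipschitzOnWith.of_dist_le_mul fun t ht s hs => ?_
  wlog hst : s ≤ t generalizing s t
  · rw [dist_comm, dist_comm t]; exact this s hs t ht (le_of_not_ge hst)
  rw [Real.dist_eq, Real.dist_eq, abs_of_nonneg (sub_nonneg.mpr hst), NNReal.coe_real_pi]
  have hcoarse := hψT s hs t ht hst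
  rcases le_total 1 (t - s) with hlarge | hsmall
  · calc |ψ t - ψ s| ≤ π / 2 * (t - s + 1) := hcoarse
      _ ≤ π * (t - s) := by nlinarith [Real.pi_pos]
  · have hle_pi : |ψ t - ψ s| ≤ π := hcoarse.trans (by nlinarith [Real.pi_pos])
    calc |ψ t - ψ s| ≤ π / 2 * ‖exp (I * ψ t) - exp (I * ψ s)‖ :=
          abs_sub_le_pi_div_two_mul_norm_exp_I_mul_sub hle_pi
      _ ≤ π / 2 * (t - s) := by
          rw [← hψ t ht, ← hψ s hs]
          gcongr
          simpa [dist_eq_norm, Real.dist_eq, abs_of_nonneg (sub_nonneg.mpr hst)] using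
            hg.dist_le_mul t ht s hs
      _ ≤ π * (t - s) := by nlinarith [Real.pi_pos]

theorem LipschitzOnWith.exists_lift {T : Set ℝ} {g : ℝ → ℂ} (hg : LipschitzOnWith 1 g T)
    (hgT : ∀ t ∈ T, ‖g t‖ = 1) :
    ∃ ψ : ℝ → ℝ, LipschitzOnWith NNReal.pi ψ T ∧ ∀ t ∈ T, g t = exp (I * ψ t) := by
  rcases T.eq_empty_or_nonempty with rfl | hT
  · exact ⟨0, lipschitzOnWith_empty _ _, fun _ h => h.elim⟩
  set K : ℝ → ℤ := fun t => ⌊4 * t⌋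
  obtain ⟨r, hrT, hrK, hrmono⟩ :=
    (show Monotone K from fun s t h => Int.floor_mono (by linarith)).exists_representatives hT
  obtain ⟨θ, hθ, hθstep⟩ := exists_int_lift (fun m => g (r m)) fun m => hgT _ (hrT m)
  have hchord : ∀ s ∈ T, ∀ t ∈ T, ‖g t - g s‖ ≤ |t - s| := fun s hs t ht => by
    simpa [dist_eq_norm, Real.dist_eq] using hg.dist_le_mul t ht s hs
  set ψ : ℝ → ℝ := fun t => θ (K t) + arg (g t / g (r (K t)))
  have hψ : ∀ t ∈ T, g t = exp (I * ψ t) := fun t ht => by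
    have hunit : ‖g t / g (r (K t))‖ = 1 := by rw [norm_div, hgT t ht, hgT _ (hrT _), div_one]
    have hr0 : g (r (K t)) ≠ 0 := norm_ne_zero_iff.mp (by rw [hgT _ (hrT _)]; exact one_ne_zero)
    rw [ofReal_add, mul_add, exp_add, hθ, exp_I_mul_arg hunit, mul_div_cancel₀ _ hr0]
  have hnear : ∀ t ∈ T, |t - r (K t)| ≤ 1 / 4 := fun t ht => by
    have := Int.abs_sub_lt_one_of_floor_eq_floor (hrK t ht).symm
    rw [← mul_sub, abs_mul, abs_of_pos four_pos] at this
    linarith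
  have harg : ∀ t ∈ T, |arg (g t / g (r (K t)))| ≤ π / 8 := fun t ht =>
    calc _ ≤ π / 2 * ‖g t - g (r (K t))‖ := abs_arg_div_le (hgT _ (hrT (K t))) (hgT t ht)
      _ ≤ π / 2 * (1 / 4) := by gcongr; exact (hchord _ (hrT (K t)) t ht).trans (hnear t ht)
      _ = π / 8 := by ring
  have hθT : ∀ s ∈ T, ∀ t ∈ T, s ≤ t →
      |θ (K t) - θ (K s)| ≤ π / 2 * r (K t) - π / 2 * r (K s) := fun s hs t ht hst => by
    have hK : K s ≤ K t := Int.floor_mono (by linarith)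
    refine Int.abs_sub_le_of_forall_abs_sub_le (w := fun i => π / 2 * r i) hK fun i hi => ?_
    have hri := hrmono s hs hi (le_trans hi (Int.le_add_one le_rfl)) (Int.le_add_one le_rfl)
    calc _ ≤ π / 2 * ‖g (r (i + 1)) - g (r i)‖ := hθstep i
      _ ≤ π / 2 * |r (i + 1) - r i| := by gcongr; exact hchord _ (hrT i) _ (hrT (i + 1))
      _ = π / 2 * r (i + 1) - π / 2 * r i := by rw [abs_of_nonneg (sub_nonneg.mpr hri), mul_sub]
  refine ⟨ψ, lipschitzOnWith_pi_of_abs_sub_le hg hψ fun s hs t ht hst => ?_, hψ⟩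
  have hr : r (K t) - r (K s) ≤ t - s + 1 / 2 := by
    linarith [(abs_le.mp (hnear s hs)).2, (abs_le.mp (hnear t ht)).1]
  calc |ψ t - ψ s|
      = |(θ (K t) - θ (K s)) + arg (g t / g (r (K t))) - arg (g s / g (r (K s)))| := by
        simp only [ψ]; ring_nf
    _ ≤ |θ (K t) - θ (K s)| + |arg (g t / g (r (K t)))| + |arg (g s / g (r (K s)))| :=
        (abs_sub _ _).trans (by gcongr; exact abs_add_le _ _)
    _ ≤ π / 2 * (t - s + 1) := by
        nlinarith [hθT s hs t ht hst, harg s hs, harg t ht, mul_le_mul_of_nonneg_left hr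
          (div_nonneg Real.pi_pos.le two_pos.le)]

theorem HasConstantSpeedOnWith.lipschitzOnWith {E : Type*} [PseudoEMetricSpace E] {f : ℝ → E}
    {s : Set ℝ} {l : NNReal} (hf : HasConstantSpeedOnWith f s l) : LipschitzOnWith l f s := by
  intro x hx y hy
  wlog hxy : x ≤ y generalizing x y
  · rw [edist_comm, edist_comm x]; exact this hy hx (le_of_not_ge hxy)
  calc edist (f x) (f y) ≤ eVariationOn f (s ∩ Set.Icc x y) :=
        eVariationOn.edist_le f ⟨hx, le_rfl, hxy⟩ ⟨hy, hxy, le_rfl⟩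
    _ = l * edist x y := by
        rw [hf hx hy, ENNReal.ofReal_mul l.coe_nonneg, ENNReal.ofReal_coe_nnreal, edist_comm,
          edist_dist, Real.dist_eq, abs_of_nonneg (sub_nonneg.mpr hxy)]

theorem BoundedVariationOn.exists_lift {α : Type*} [LinearOrder α] {S : Set α} {f : α → ℂ}
    (hbv : BoundedVariationOn f S) (hf : ∀ x ∈ S, ‖f x‖ = 1) :
    ∃ φ : α → ℝ, BoundedVariationOn φ S ∧ ∀ x ∈ S, f x = exp (I * φ x) := by
  rcases S.eq_empty_or_nonempty with rfl | ⟨x₀, hx₀⟩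
  · exact ⟨0, BoundedVariationOn.of_subsingleton Set.subsingleton_empty, fun _ h => h.elim⟩
  set v := variationOnFromTo f S x₀
  set g := naturalParameterization f S x₀
  have hfg : ∀ x ∈ S, g (v x) = f x := fun x hx =>
    edist_eq_zero.mp (edist_naturalParameterization_eq_zero hbv.locallyBoundedVariationOn hx₀ hx)
  have hg : LipschitzOnWith 1 g (v '' S) :=
    (has_unit_speed_naturalParameterization f hbv.locallyBoundedVariationOn hx₀).lipschitzOnWith
  obtain ⟨ψ, hψ, hgψ⟩ :=
    hg.exists_lift (by rintro _ ⟨x, hx, rfl⟩; rw [hfg x hx, hf x hx])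
  have hv : BoundedVariationOn v S :=
    (variationOnFromTo.monotoneOn hbv.locallyBoundedVariationOn hx₀).boundedVariationOn
      fun _ _ => variationOnFromTo.abs_le_eVariationOn hbv
  refine ⟨ψ ∘ v, hψ.comp_boundedVariationOn (Set.mapsTo_image v S) hv, fun x hx => ?_⟩
  rw [← hfg x hx, hgψ _ (Set.mem_image_of_mem v hx), Function.comp_apply]

/-- A unimodular function on `S ⊆ ℝ` has bounded variation iff it is
`e^{iφ}` for some real-valued function `φ` of bounded variation on `S`. -/
theorem stmt15
    (S : Set ℝ) (f : ℝ → ℂ) (hf : ∀ x ∈ S, ‖f x‖ = 1) :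
    BoundedVariationOn f S ↔
      ∃ φ : ℝ → ℝ, BoundedVariationOn φ S ∧
        ∀ x ∈ S, f x = Complex.exp (Complex.I * (φ x : ℂ)) := by
  refine ⟨fun hbv => hbv.exists_lift hf, fun ⟨φ, hφ, hfφ⟩ => ?_⟩
  rw [BoundedVariationOn, eVariationOn.eq_of_eqOn hfφ]
  exact lipschitzWith_exp_I_mul.comp_boundedVariationOn hφ
end

section
/- Let I_m = {[a_j,b_j]}_{j=1}^m be a system of closed intervals of ℝ with a_1 ≤ b_1 < a_2 ≤ b_2 < … < a_m ≤ b_m, and let Θ be its angle function. Then 0 ≤ Θ(ξ) ≤ π for every ξ ∈ ℂ; if ξ ∉ ∪_{j=1}^m [a_j,b_j] then Θ(ξ) < π; and if ξ ∈ [a_j, b_j) for some j then Θ(ξ) = π. -/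
open MeasureTheory Metric Complex Polynomial Filter Topology Asymptotics
open scoped Classical ENNReal

/-!
On the real axis, `[a, b]` is seen from `x` under the angle `π` if `x ∈ [a, b)` and `0`
otherwise, and the intervals `[a_j, b_j)` are disjoint, so `Θ(x)` is `π` times the indicator of
their union. Off the real axis, `Θ(conj ξ) = Θ(ξ)`, so let `Im ξ < 0`. Then `t ↦ arg (t - ξ)`
is decreasing with values in `(0, π)`, and `Θ(ξ)` is a sum of its decrements over disjoint
ordered intervals, which telescopes to at most `arg (a_1 - ξ) - arg (b_m - ξ) < π`.
-/

open scoped Real ComplexConjugate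

section Telescoping

variable {α : Type*} [Preorder α] {g : α → ℝ}

theorem Monotone.sum_sub_le_of_intervals_ordered (hg : Monotone g) :
    ∀ {m : ℕ} (a b : Fin m → α), (∀ j k, j < k → b j ≤ a k) → ∀ {c d : α},
      (∀ j, c ≤ a j) → (∀ j, b j ≤ d) → c ≤ d → ∑ j, (g (b j) - g (a j)) ≤ g d - g c
  | 0, _, _, _, _, _, _, _, hcd => by simpa using hg hcd
  | _ + 1, a, b, hord, c, d, hc, hd, _ => by
    have hrest := hg.sum_sub_le_of_intervals_ordered (fun j => a j.succ) (fun j => b j.succ)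
      (fun j k hjk => hord _ _ (Fin.succ_lt_succ_iff.2 hjk))
      (fun j => hord 0 j.succ j.succ_pos) (fun j => hd j.succ) (hd 0)
    rw [Fin.sum_univ_succ]
    linarith [hg (hc 0)]

theorem Monotone.sum_sub_lt_of_intervals_ordered [Nonempty α] (hg : Monotone g) {m : ℕ}
    (a b : Fin m → α) (hab : ∀ j, a j ≤ b j) (hord : ∀ j k, j < k → b j ≤ a k) {L U : ℝ}
    (hL : ∀ t, L < g t) (hU : ∀ t, g t ≤ U) : ∑ j, (g (b j) - g (a j)) < U - L := by
  cases m with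
  | zero =>
    obtain ⟨t⟩ := ‹Nonempty α›
    simpa using (hL t).trans_le (hU t)
  | succ n =>
    have ha : ∀ j, a 0 ≤ a j := fun j => by
      rcases eq_or_ne j 0 with rfl | hj
      · exact le_rfl
      · exact (hab 0).trans (hord 0 j (Fin.pos_iff_ne_zero.2 hj))
    have hb : ∀ j, b j ≤ b (Fin.last n) := fun j => by
      rcases eq_or_ne j (Fin.last n) with rfl | hj
      · exact le_rfl
      · exact (hord j _ (Fin.lt_last_iff_ne_last.2 hj)).trans (hab _)
    calc ∑ j, (g (b j) - g (a j)) ≤ g (b (Fin.last n)) - g (a 0) :=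
          hg.sum_sub_le_of_intervals_ordered a b hord ha hb ((ha _).trans (hab _))
      _ < U - L := by linarith [hL (a 0), hU (b (Fin.last n))]

end Telescoping

theorem arg_mem_Ioo_of_im_pos {z : ℂ} (hz : 0 < z.im) : arg z ∈ Set.Ioo 0 π :=
  ⟨(arg_nonneg_iff.2 hz.le).lt_of_ne' fun h => hz.ne' (arg_eq_zero_iff.1 h).2,
    arg_lt_pi_iff.2 (Or.inr hz.ne')⟩

theorem arg_ofReal_sub_strictAnti {ξ : ℂ} (hξ : ξ.im < 0) :
    StrictAnti fun t : ℝ => arg (t - ξ) := by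
  intro s t hst
  have harg : ∀ u : ℝ, arg (u - ξ) ∈ Set.Ioo 0 π := fun u => arg_mem_Ioo_of_im_pos (by simpa)
  have hne : ∀ u : ℝ, (u : ℂ) - ξ ≠ 0 := fun u h => by simpa [h] using (harg u).1
  -- `arg (t - ξ) - arg (s - ξ)` lies in `(-π, π)`, so it is the argument of `(t - ξ) * conj (s - ξ)`
  have hdiff : arg ((t - ξ) * conj (s - ξ)) = arg (t - ξ) - arg (s - ξ) := by
    have hconj : arg (conj ((s : ℂ) - ξ)) = -arg (s - ξ) := by
      rw [arg_conj, if_neg (harg s).2.ne]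
    have hsum : arg (t - ξ) + arg (conj ((s : ℂ) - ξ)) ∈ Set.Ioc (-π) π := by
      rw [hconj]
      constructor <;> linarith [(harg s).1, (harg t).1, (harg s).2, (harg t).2]
    rw [arg_mul (hne t) ((_root_.map_ne_zero _).2 (hne s)) hsum, hconj, ← sub_eq_add_neg]
  have him : ((t - ξ) * conj ((s : ℂ) - ξ)).im = ξ.im * (t - s) := by simp; ring
  have hneg : arg ((t - ξ) * conj (s - ξ)) < 0 :=
    arg_neg_iff.2 (him ▸ mul_neg_of_neg_of_pos hξ (sub_pos.2 hst))
  show arg (t - ξ) < arg (s - ξ)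
  linarith

section AngleFunction

variable {m : ℕ} {a b : Fin m → ℝ}

theorem argA_of_ne_zero {z : ℂ} (hz : z ≠ 0) : argA z = arg z := if_neg hz

theorem argA_ofReal (r : ℝ) : argA r = if 0 < r then 0 else π := by
  rcases lt_trichotomy r 0 with hr | rfl | hr
  · rw [argA_of_ne_zero (ofReal_ne_zero.2 hr.ne), arg_ofReal_of_neg hr, if_neg hr.not_gt]
  · simp [argA]
  · rw [argA_of_ne_zero (ofReal_ne_zero.2 hr.ne'), arg_ofReal_of_nonneg hr.le, if_pos hr]

theorem argA_conj {z : ℂ} (hz : z.im ≠ 0) : argA (conj z) = -argA z := by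
  have hz₀ : z ≠ 0 := fun h => hz (by simp [h])
  rw [argA_of_ne_zero ((_root_.map_ne_zero _).2 hz₀), argA_of_ne_zero hz₀, arg_conj,
    if_neg fun h => hz (arg_eq_pi_iff.1 h).2]

theorem ang_ofReal {x a b : ℝ} (hab : a ≤ b) :
    ang x a b = (Set.Ico a b).indicator (fun _ => π) x := by
  have hA : ∀ y : ℝ, argA ((y : ℂ) - x) = if x < y then 0 else π := fun y => by
    simp only [← ofReal_sub, argA_ofReal, sub_pos]
  simp only [ang, hA, Set.indicator_apply, Set.mem_Ico]
  split_ifs <;> grind [Real.pi_pos]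

theorem ang_conj (ξ : ℂ) (a b : ℝ) : ang (conj ξ) a b = ang ξ a b := by
  rcases eq_or_ne ξ.im 0 with hξ | hξ
  · rw [conj_eq_iff_im.2 hξ]
  have hA : ∀ t : ℝ, argA (t - conj ξ) = -argA (t - ξ) := fun t => by
    rw [show (t : ℂ) - conj ξ = conj ((t : ℂ) - ξ) by simp, argA_conj (by simpa using hξ)]
  rw [ang, ang, hA, hA, neg_sub_neg, abs_sub_comm]

theorem theta_conj (ξ : ℂ) : theta a b (conj ξ) = theta a b ξ :=
  Finset.sum_congr rfl fun j _ => ang_conj ξ (a j) (b j)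

theorem theta_nonneg (ξ : ℂ) : 0 ≤ theta a b ξ :=
  Finset.sum_nonneg fun _ _ => abs_nonneg _

theorem theta_ofReal (hab : ∀ j, a j ≤ b j) (hord : ∀ j k, j < k → b j ≤ a k) (x : ℝ) :
    theta a b x = (⋃ j, Set.Ico (a j) (b j)).indicator (fun _ => π) x := by
  have hdisj : ((Finset.univ : Finset (Fin m)) : Set (Fin m)).PairwiseDisjoint
      fun j => Set.Ico (a j) (b j) := by
    intro j _ k _ hjk
    rcases hjk.lt_or_gt with h | h <;> refine Set.disjoint_left.2 fun y hj hk => ?_ <;>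
      simp only [Set.mem_Ico] at hj hk <;> linarith [hord _ _ h]
  simpa [theta, ang_ofReal (hab _)] using (Finset.indicator_biUnion_apply _ _ hdisj x).symm

theorem theta_lt_pi_of_im_neg (hab : ∀ j, a j ≤ b j) (hord : ∀ j k, j < k → b j ≤ a k)
    {ξ : ℂ} (hξ : ξ.im < 0) : theta a b ξ < π := by
  have hanti := arg_ofReal_sub_strictAnti hξ
  have harg : ∀ t : ℝ, arg (t - ξ) ∈ Set.Ioo 0 π := fun t => arg_mem_Ioo_of_im_pos (by simpa)
  have hne : ∀ t : ℝ, (t : ℂ) - ξ ≠ 0 := fun t h => by simpa [h] using (harg t).1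
  have hθ : theta a b ξ = ∑ j, (-arg (b j - ξ) - -arg (a j - ξ)) := by
    refine Finset.sum_congr rfl fun j _ => ?_
    rw [ang, argA_of_ne_zero (hne _), argA_of_ne_zero (hne _),
      abs_of_nonneg (sub_nonneg.2 (hanti.antitone (hab j)))]
    ring
  rw [hθ]
  simpa using hanti.antitone.neg.sum_sub_lt_of_intervals_ordered a b hab hord
    (fun t => neg_lt_neg (harg t).2) (fun t => neg_nonpos.2 (harg t).1.le)

theorem theta_lt_pi_of_im_ne_zero (hab : ∀ j, a j ≤ b j) (hord : ∀ j k, j < k → b j ≤ a k)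
    {ξ : ℂ} (hξ : ξ.im ≠ 0) : theta a b ξ < π := by
  rcases hξ.lt_or_gt with h | h
  · exact theta_lt_pi_of_im_neg hab hord h
  · rw [← theta_conj]
    exact theta_lt_pi_of_im_neg hab hord (by simpa using h)

end AngleFunction

/-- The angle function `Θ` of a system of ordered intervals satisfies
`0 ≤ Θ ≤ π` everywhere, `Θ(ξ) < π` off the union of the intervals, and `Θ(ξ) = π` on
each `[a_j, b_j)`. -/
theorem stmt18
    {m : ℕ} (a b : Fin m → ℝ) (hab : ∀ j, a j ≤ b j)
    (hord : ∀ j k : Fin m, j < k → b j < a k) :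
    (∀ ξ : ℂ, 0 ≤ theta a b ξ ∧ theta a b ξ ≤ Real.pi) ∧
    (∀ ξ : ℂ, ξ ∉ cemb (⋃ j, Set.Icc (a j) (b j)) → theta a b ξ < Real.pi) ∧
    (∀ j : Fin m, ∀ x : ℝ, x ∈ Set.Ico (a j) (b j) → theta a b (x : ℂ) = Real.pi) := by
  have hord' : ∀ j k, j < k → b j ≤ a k := fun j k h => (hord j k h).le
  refine ⟨fun ξ => ⟨theta_nonneg ξ, ?_⟩, fun ξ hξ => ?_, fun j x hx => ?_⟩
  · rcases eq_or_ne ξ.im 0 with h | h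
    · obtain ⟨x, rfl⟩ := conj_eq_iff_real.1 (conj_eq_iff_im.2 h)
      rw [theta_ofReal hab hord']
      exact Set.indicator_apply_le' (fun _ => le_rfl) fun _ => Real.pi_pos.le
    · exact (theta_lt_pi_of_im_ne_zero hab hord' h).le
  · rcases eq_or_ne ξ.im 0 with h | h
    · obtain ⟨x, rfl⟩ := conj_eq_iff_real.1 (conj_eq_iff_im.2 h)
      have hx : x ∉ ⋃ j, Set.Ico (a j) (b j) := fun hx => hξ ⟨x, by
        obtain ⟨j, hj⟩ := Set.mem_iUnion.1 hx
        exact Set.mem_iUnion.2 ⟨j, Set.Ico_subset_Icc_self hj⟩, rfl⟩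
      rw [theta_ofReal hab hord', Set.indicator_of_notMem hx]
      exact Real.pi_pos
    · exact theta_lt_pi_of_im_ne_zero hab hord' h
  · rw [theta_ofReal hab hord', Set.indicator_of_mem (Set.mem_iUnion.2 ⟨j, hx⟩)]
end
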